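/- Laguerre limit of the Selberg integral at γ = 1, α = 3/2: ∫_{ℝ^m} Π_{1≤i<j≤m}(xⱼ² − xᵢ²)² · Π_k x_k² e^{−x_k²} dx₁…dx_m = m! · π^{m/2} · 2^{−m²} · Π_{j=1}^{m}(2j−1)!. -/

import Mathlib

/-!
Both determinants `det (x_i ^ (2j+1))` and `det (x_i ^ (2j+1) e^{-x_i²})` are a product of
diagonal factors times the Vandermonde determinant in the `x_i²`, so the integrand is their
product. Andréief's identity turns the integral of a product of two determinants into
`m!` times the determinant of the moment matrix, here `∫ y^(2i+2j+2) e^{-y²} dy = Γ(i + j + 3/2)`.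
Since `Γ(i + a) = (a)_i Γ(a)` with `(a)_i` a monic polynomial of degree `i` in `a`, the
determinant of this Hankel matrix is `∏ Γ(j + 3/2)` times the Vandermonde determinant of
`0, 1, …, m-1`, which is `∏ j!`; the half-integer values of `Γ` finish the computation.
-/

open MeasureTheory Finset Matrix Equiv Real
open scoped Nat

section Andreief

variable {n : Type*} [Fintype n] [DecidableEq n]

theorem sum_sign_mul_sign_mul_prod_eq_factorial_mul_det {R : Type*} [CommRing R]
    (A : Matrix n n R) :
    ∑ σ : Perm n, ∑ τ : Perm n,
        ((Perm.sign σ : ℤ) : R) * ((Perm.sign τ : ℤ) : R) * ∏ k, A (σ k) (τ k)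
      = ((Fintype.card n)! : R) * A.det := by
  have hinner (σ : Perm n) :
      ∑ τ : Perm n, ((Perm.sign σ : ℤ) : R) * ((Perm.sign τ : ℤ) : R) * ∏ k, A (σ k) (τ k)
        = A.det := by
    -- substituting `τ = ρ * σ` turns the inner sum into the Leibniz expansion of `det A`
    rw [← det_transpose, det_apply', ← Equiv.sum_comp (Equiv.mulRight σ)]
    refine sum_congr rfl fun ρ _ => ?_
    have hsign :
        ((Perm.sign σ : ℤ) : R) * ((Perm.sign (ρ * σ) : ℤ) : R) = ((Perm.sign ρ : ℤ) : R) := by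
      rw [← Int.cast_mul, ← Units.val_mul, Perm.sign_mul, mul_left_comm, Int.units_mul_self,
        mul_one]
    simp only [Equiv.coe_mulRight, Perm.coe_mul, Function.comp_apply, transpose_apply]
    rw [hsign]
    congr 1
    exact Fintype.prod_equiv σ _ _ fun k => rfl
  simp only [hinner, sum_const, Finset.card_univ, Fintype.card_perm, nsmul_eq_mul]

/-- **Andréief's identity**. -/
theorem integral_det_mul_det {α : Type*} [MeasurableSpace α] (μ : Measure α) [SigmaFinite μ]
    (f g : n → α → ℝ) (hfg : ∀ i j, Integrable (fun y => f i y * g j y) μ) :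
    ∫ x : n → α, (of fun i j => f j (x i)).det * (of fun i j => g j (x i)).det
        ∂(Measure.pi fun _ => μ)
      = ((Fintype.card n)! : ℝ) * (of fun i j => ∫ y, f i y * g j y ∂μ).det := by
  have hterm (σ τ : Perm n) : Integrable (fun x : n → α => ∏ k, f (σ k) (x k) * g (τ k) (x k))
      (Measure.pi fun _ => μ) :=
    Integrable.fintype_prod fun k => hfg (σ k) (τ k)
  have hexpand (x : n → α) : (of fun i j => f j (x i)).det * (of fun i j => g j (x i)).det
      = ∑ σ : Perm n, ∑ τ : Perm n, ((Perm.sign σ : ℤ) : ℝ) * ((Perm.sign τ : ℤ) : ℝ) *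
          ∏ k, f (σ k) (x k) * g (τ k) (x k) := by
    rw [← det_transpose, det_apply', ← det_transpose (of _), det_apply', sum_mul_sum]
    refine sum_congr rfl fun σ _ => sum_congr rfl fun τ _ => ?_
    simp only [transpose_apply, of_apply, prod_mul_distrib]
    ring
  simp_rw [hexpand]
  rw [integral_finsetSum _ fun σ _ => integrable_finsetSum _ fun τ _ => (hterm σ τ).const_mul _]
  refine (sum_congr rfl fun σ _ => ?_).trans (sum_sign_mul_sign_mul_prod_eq_factorial_mul_det _)
  rw [integral_finsetSum _ fun τ _ => (hterm σ τ).const_mul _]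
  refine sum_congr rfl fun τ _ => ?_
  rw [integral_const_mul, integral_fintype_prod_eq_prod (f := fun k y => f (σ k) y * g (τ k) y)]
  rfl

end Andreief

theorem Gamma_nat_add_eq_ascPochhammer_mul {z : ℝ} (hz : 0 < z) (n : ℕ) :
    Gamma (n + z) = (ascPochhammer ℝ n).eval z * Gamma z := by
  induction n with
  | zero => simp
  | succ n ih =>
    rw [Nat.cast_succ, add_right_comm, Gamma_add_one (by positivity), ih,
      ascPochhammer_succ_right, Polynomial.eval_mul]
    simp only [Polynomial.eval_add, Polynomial.eval_X, Polynomial.eval_natCast]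
    ring

theorem det_Gamma_nat_add {m : ℕ} (a : Fin m → ℝ) (ha : ∀ j, 0 < a j) :
    (of fun i j : Fin m => Gamma (i + a j)).det = (∏ j, Gamma (a j)) * (vandermonde a).det := by
  have hfactor : (of fun i j : Fin m => Gamma (i + a j))
      = (of fun i j : Fin m => (ascPochhammer ℝ i).eval (a j)) * diagonal fun j => Gamma (a j) := by
    ext i j
    simp [mul_diagonal, Gamma_nat_add_eq_ascPochhammer_mul (ha j)]
  rw [hfactor, det_mul, det_diagonal, mul_comm, ← det_transpose,
    det_eval_matrixOfPolynomials_eq_det_vandermonde a _ (fun i => ascPochhammer_natDegree ℝ i)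
      (fun i => monic_ascPochhammer ℝ i)]
  rfl

theorem det_vandermonde_natCast_add {R : Type*} [CommRing R] (m : ℕ) (c : R) :
    (vandermonde fun i : Fin m => (i : R) + c).det = ∏ j : Fin m, ((j : ℕ)! : R) := by
  rw [det_vandermonde_add]
  cases m with
  | zero => simp
  | succ m =>
    rw [det_vandermonde_id_eq_superFactorial, ← Nat.prod_range_succ_factorial,
      Fin.prod_univ_eq_prod_range (fun j => ((j ! : ℕ) : R)), Nat.cast_prod]

theorem integrable_pow_mul_exp_neg_sq (n : ℕ) : Integrable fun y : ℝ => y ^ n * exp (-y ^ 2) := by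
  simpa [rpow_natCast] using integrable_rpow_mul_exp_neg_mul_sq one_pos (s := n)
    (by linarith [(n.cast_nonneg : (0 : ℝ) ≤ n)])

theorem integral_pow_two_mul_mul_exp_neg_sq (n : ℕ) :
    ∫ y : ℝ, y ^ (2 * n) * exp (-y ^ 2) = Gamma (n + 1 / 2) := by
  have heven : (fun y : ℝ => y ^ (2 * n) * exp (-y ^ 2))
      = fun y => |y| ^ (2 * n) * exp (-|y| ^ 2) := by
    ext y
    rw [pow_mul, pow_mul, sq_abs]
  have hhalf : ∫ y in Set.Ioi (0 : ℝ), y ^ (2 * n) * exp (-y ^ 2)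
      = 1 / 2 * Gamma ((((2 * n : ℕ) : ℝ) + 1) / 2) := by
    rw [← integral_rpow_mul_exp_neg_rpow (q := ((2 * n : ℕ) : ℝ)) two_pos
      (by linarith [(Nat.cast_nonneg (2 * n) : (0 : ℝ) ≤ _)])]
    refine setIntegral_congr_fun measurableSet_Ioi fun y _ => ?_
    rw [rpow_natCast, rpow_two]
  rw [heven, integral_comp_abs (f := fun y : ℝ => y ^ (2 * n) * exp (-y ^ 2)), hhalf]
  push_cast
  ring_nf

theorem factorial_mul_Gamma_nat_add_three_halves (n : ℕ) :
    n ! * Gamma (n + 3 / 2) = √π * (2 * n + 1)! / 2 ^ (2 * n + 1) := by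
  have h := Gamma_nat_add_one_add_half n
  rw [add_assoc, show (1 : ℝ) + 1 / 2 = 3 / 2 by norm_num] at h
  rw [h, Nat.factorial_eq_mul_doubleFactorial (2 * n), Nat.doubleFactorial_two_mul]
  push_cast
  field_simp
  ring

theorem prod_factorial_mul_Gamma_nat_add_three_halves (m : ℕ) :
    ∏ j ∈ range m, (j ! * Gamma (j + 3 / 2))
      = √π ^ m * (∏ j ∈ Icc 1 m, ((2 * j - 1)! : ℝ)) / 2 ^ (m ^ 2) := by
  induction m with
  | zero => simp
  | succ m ih =>
    rw [prod_range_succ, ih, factorial_mul_Gamma_nat_add_three_halves,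
      prod_Icc_succ_top (by omega), show 2 * (m + 1) - 1 = 2 * m + 1 by omega]
    field_simp
    ring

theorem det_pow_two_mul_add_one_mul {R : Type*} [CommRing R] {m : ℕ} (x c : Fin m → R) :
    (of fun i j : Fin m => x i ^ (2 * (j : ℕ) + 1) * c i).det
      = (∏ i, x i * c i) * ∏ i, ∏ j ∈ Ioi i, (x j ^ 2 - x i ^ 2) := by
  rw [← det_vandermonde, ← det_mul_column]
  congr 1
  ext i j
  simp only [of_apply, vandermonde_apply]
  ring

theorem prod_sq_sub_sq_sq_mul_prod_eq_det_mul_det {m : ℕ} (x w : Fin m → ℝ) :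
    (∏ i, ∏ j ∈ Ioi i, (x j ^ 2 - x i ^ 2) ^ 2) * ∏ k, x k ^ 2 * w k
      = (of fun i j : Fin m => x i ^ (2 * (j : ℕ) + 1)).det
        * (of fun i j : Fin m => x i ^ (2 * (j : ℕ) + 1) * w i).det := by
  have h := det_pow_two_mul_add_one_mul x 1
  simp only [Pi.one_apply, mul_one] at h
  rw [h, det_pow_two_mul_add_one_mul]
  simp only [prod_pow, prod_mul_distrib]
  ring

/-- Laguerre limit of the Selberg integral with `γ = 1`, `α = 3/2`:
`∫_{ℝ^m} Π_{i<j}(xⱼ² - xᵢ²)² Π_k x_k² e^{-x_k²} dx = m! π^{m/2} 2^{-m²} Π_{j=1}^{m}(2j-1)!`. -/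
theorem selberg_laguerre_three_half (m : ℕ) :
    (∫ x : Fin m → ℝ,
        (∏ i : Fin m, ∏ j ∈ Finset.Ioi i, ((x j) ^ 2 - (x i) ^ 2) ^ 2) *
          ∏ k : Fin m, (x k) ^ 2 * Real.exp (-(x k) ^ 2))
      = (m.factorial : ℝ) * Real.sqrt Real.pi ^ m *
          (∏ j ∈ Finset.Icc 1 m, ((2 * j - 1).factorial : ℝ)) / 2 ^ (m ^ 2) := by
  have hentry (i j : Fin m) (y : ℝ) :
      y ^ (2 * (i : ℕ) + 1) * (y ^ (2 * (j : ℕ) + 1) * exp (-y ^ 2))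
        = y ^ (2 * (i + j + 1 : ℕ)) * exp (-y ^ 2) := by
    ring
  calc _ = ∫ x : Fin m → ℝ, (of fun i j : Fin m => x i ^ (2 * (j : ℕ) + 1)).det
        * (of fun i j : Fin m => x i ^ (2 * (j : ℕ) + 1) * exp (-x i ^ 2)).det :=
        integral_congr_ae (ae_of_all _ fun x => prod_sq_sub_sq_sq_mul_prod_eq_det_mul_det x _)
    _ = m ! * (of fun i j : Fin m => Gamma (i + ((j : ℝ) + 3 / 2))).det := by
        rw [volume_pi, integral_det_mul_det volume (fun (j : Fin m) y => y ^ (2 * (j : ℕ) + 1))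
          (fun (j : Fin m) y => y ^ (2 * (j : ℕ) + 1) * exp (-y ^ 2)) ?_]
        · simp_rw [hentry, integral_pow_two_mul_mul_exp_neg_sq, Fintype.card_fin]
          congr 3 with i j
          push_cast
          ring_nf
        · intro i j
          simpa only [hentry] using integrable_pow_mul_exp_neg_sq _
    _ = m ! * ∏ j ∈ range m, (j ! * Gamma (j + 3 / 2)) := by
        rw [det_Gamma_nat_add _ fun j => by positivity, det_vandermonde_natCast_add,
          ← prod_mul_distrib, Fin.prod_univ_eq_prod_range (fun j => Gamma (j + 3 / 2) * j !)]
        simp only [mul_comm]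
    _ = _ := by
        rw [prod_factorial_mul_Gamma_nat_add_three_halves]
        ring
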